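/- (Reflection lemma for the N_f = 2 index.) Let q, a, v be complex numbers with 0 < |q| < 1, |q| < |a| < 1, v ≠ 0, and suppose that neither v² nor a/v² is an integer power of q. Then for every non-negative integer k, a^{−k} · (q^{1−k}v², a, a/v²; q)_∞ / [(v^{−2}, q^{1−k}/a, q^{1−k}v²/a, q; q)_∞] · Σ_{n=0}^∞ (q^{1−k}/a, q^{1−k}v²/a, q/a, qv²/a; q)_n (q^{1+n−k};q)_∞ a^{2n} / (q^{1−k}v², qv², q; q)_n = a^{k} · (q^{1+k}, q^{1+k}v², a, a/v²; q)_∞ / (v^{−2}, q^{1+k}/a, q^{1+k}v²/a, q; q)_∞ · Σ_{n=0}^∞ (q^{1+k}/a, q^{1+k}v²/a, q/a, qv²/a; q)_n a^{2n} / (q^{1+k}, q^{1+k}v², qv², q; q)_n. (Here the singular ratio (q^{1−k};q)_∞/(q^{1−k};q)_n appearing in the k ↦ −k summand is interpreted as (q^{1+n−k};q)_∞.) -/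

import Mathlib

open scoped BigOperators

/-- The infinite q-Pochhammer symbol `(z;q)_∞ = ∏_{j=0}^∞ (1 - z q^j)`. -/
noncomputable def qPochInf (z q : ℂ) : ℂ := ∏' j : ℕ, (1 - z * q ^ j)

/-- The q-Pochhammer symbol `(z;q)_n = (z;q)_∞ / (z q^n;q)_∞` for `n : ℤ`. -/
noncomputable def qPochInt (z q : ℂ) (n : ℤ) : ℂ :=
  qPochInf z q / qPochInf (z * q ^ n) q

/-! For `n < k` the factor `(q^{1+n-k};q)_∞` of the `n`-th term on the left contains
`1 - q^0 = 0`, so the left series starts at `n = k`. After the shift `n = m + k`, writing every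
`(z;q)_n` as `(z;q)_∞ / (z q^n;q)_∞` turns the `m`-th term on the left into the `m`-th term on
the right by cancellation. The cancelled infinite products are nonzero because `a`, `v²` and
`a / v²` are not integral powers of `q` (for `a` this follows from `|q| < |a| < 1`), and a
product `∏ (1 - z q^j)` with `∑ |z q^j| < ∞` vanishes only if one of its factors does. -/

theorem tsum_nat_add_eq_tsum_of_eq_zero {α : Type*} [AddCommMonoid α] [TopologicalSpace α]
    {f : ℕ → α} {k : ℕ} (hf : ∀ n < k, f n = 0) : ∑' m, f (m + k) = ∑' n, f n :=
  (add_left_injective k).tsum_eq fun n hn =>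
    ⟨n - k, Nat.sub_add_cancel (not_lt.mp fun h => hn (hf n h))⟩

section ZPowers

variable {G₀ : Type*} {q c : G₀}

lemma inv_ne_zpow [GroupWithZero G₀] (hc : ∀ m : ℤ, c ≠ q ^ m) (m : ℤ) : c⁻¹ ≠ q ^ m :=
  fun h => hc (-m) (by rw [zpow_neg, ← h, inv_inv])

lemma zpow_mul_ne_zpow [CommGroupWithZero G₀] (hq : q ≠ 0) (hc : ∀ m : ℤ, c ≠ q ^ m)
    (e m : ℤ) : q ^ e * c ≠ q ^ m :=
  fun h => hc (m - e) (by rw [zpow_sub₀ hq, ← h]; field_simp)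

end ZPowers

section NormedZPowers

variable {𝕜 : Type*} [NormedDivisionRing 𝕜] {q c : 𝕜}

lemma zpow_ne_one_of_norm_lt_one (hq0 : 0 < ‖q‖) (hq1 : ‖q‖ < 1) {e : ℤ} (he : 0 < e) :
    q ^ e ≠ 1 := by
  intro h
  simpa [← norm_zpow, h] using zpow_lt_one₀ hq0 hq1 he

lemma ne_zpow_of_norm_lt (hq0 : 0 < ‖q‖) (hqc : ‖q‖ < ‖c‖) (hc : ‖c‖ < 1) (m : ℤ) :
    c ≠ q ^ m := by
  rintro rfl
  rw [norm_zpow] at hqc hc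
  rcases le_or_gt m 0 with hm | hm
  · exact (one_le_zpow_of_nonpos₀ hq0 (hqc.trans hc).le hm).not_gt hc
  · simpa using (zpow_le_zpow_right_of_le_one₀ hq0 (hqc.trans hc).le hm).trans_lt' hqc

end NormedZPowers

section QPochhammer

variable {z q c : ℂ}

lemma qPochInf_eq_zero_of_mul_pow_eq_one {j : ℕ} (h : z * q ^ j = 1) : qPochInf z q = 0 :=
  tprod_of_exists_eq_zero ⟨j, by simp [h]⟩

lemma qPochInf_ne_zero (hq : ‖q‖ < 1) (h : ∀ j : ℕ, z * q ^ j ≠ 1) : qPochInf z q ≠ 0 := by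
  simpa [qPochInf, ← sub_eq_add_neg] using
    tprod_one_add_ne_zero_of_summable (f := fun j : ℕ => -(z * q ^ j))
      (fun j => by simpa [← sub_eq_add_neg, sub_eq_zero] using (h j).symm)
      (by simpa using (summable_geometric_of_lt_one (norm_nonneg q) hq).mul_left ‖z‖)

lemma qPochInf_ne_zero_of_forall_ne_zpow (hq : ‖q‖ < 1) (hc : ∀ m : ℤ, c ≠ q ^ m) :
    qPochInf c q ≠ 0 :=
  qPochInf_ne_zero hq fun j h =>
    hc (-j) (by rw [zpow_neg, zpow_natCast]; exact eq_inv_of_mul_eq_one_left h)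

lemma qPochInf_zpow_eq_zero (hq : q ≠ 0) {e : ℤ} (he : e ≤ 0) : qPochInf (q ^ e) q = 0 :=
  qPochInf_eq_zero_of_mul_pow_eq_one (j := (-e).toNat) <| by
    rw [← zpow_natCast, ← zpow_add₀ hq, Int.toNat_of_nonneg (by omega), add_neg_cancel, zpow_zero]

lemma qPochInf_zpow_ne_zero (hq0 : 0 < ‖q‖) (hq1 : ‖q‖ < 1) {e : ℤ} (he : 0 < e) :
    qPochInf (q ^ e) q ≠ 0 :=
  qPochInf_ne_zero hq1 fun j => by
    rw [← zpow_natCast, ← zpow_add₀ (norm_pos_iff.mp hq0)]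
    exact zpow_ne_one_of_norm_lt_one hq0 hq1 (by omega)

end QPochhammer

theorem reflection_lemma_Nf2_general (q a v : ℂ)
    (hq0 : 0 < ‖q‖) (hq1 : ‖q‖ < 1)
    (hqa : ‖q‖ < ‖a‖) (ha : ‖a‖ < 1)
    (hv2 : ∀ m : ℤ, v ^ 2 ≠ q ^ m)
    (hav2 : ∀ m : ℤ, a / v ^ 2 ≠ q ^ m)
    (k : ℕ) :
    a ^ (-(k : ℤ)) *
      ((qPochInf (q ^ (1 - (k : ℤ)) * v ^ 2) q * qPochInf a q * qPochInf (a / v ^ 2) q) /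
       (qPochInf (v ^ (-2 : ℤ)) q * qPochInf (q ^ (1 - (k : ℤ)) / a) q *
        qPochInf (q ^ (1 - (k : ℤ)) * v ^ 2 / a) q * qPochInf q q)) *
      (∑' n : ℕ,
        (qPochInt (q ^ (1 - (k : ℤ)) / a) q n * qPochInt (q ^ (1 - (k : ℤ)) * v ^ 2 / a) q n *
         qPochInt (q / a) q n * qPochInt (q * v ^ 2 / a) q n) *
        qPochInf (q ^ (1 + (n : ℤ) - (k : ℤ))) q * a ^ (2 * n) /
        (qPochInt (q ^ (1 - (k : ℤ)) * v ^ 2) q n * qPochInt (q * v ^ 2) q n *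
         qPochInt q q n))
    = a ^ (k : ℤ) *
      ((qPochInf (q ^ (1 + (k : ℤ))) q * qPochInf (q ^ (1 + (k : ℤ)) * v ^ 2) q *
        qPochInf a q * qPochInf (a / v ^ 2) q) /
       (qPochInf (v ^ (-2 : ℤ)) q * qPochInf (q ^ (1 + (k : ℤ)) / a) q *
        qPochInf (q ^ (1 + (k : ℤ)) * v ^ 2 / a) q * qPochInf q q)) *
      (∑' n : ℕ,
        (qPochInt (q ^ (1 + (k : ℤ)) / a) q n * qPochInt (q ^ (1 + (k : ℤ)) * v ^ 2 / a) q n *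
         qPochInt (q / a) q n * qPochInt (q * v ^ 2 / a) q n) * a ^ (2 * n) /
        (qPochInt (q ^ (1 + (k : ℤ))) q n * qPochInt (q ^ (1 + (k : ℤ)) * v ^ 2) q n *
         qPochInt (q * v ^ 2) q n * qPochInt q q n)) := by
  have hq : q ≠ 0 := norm_pos_iff.mp hq0
  have ha0 : a ≠ 0 := norm_pos_iff.mp (hq0.trans hqa)
  have hA : ∀ e : ℤ, qPochInf (q ^ e / a) q ≠ 0 := fun e =>
    qPochInf_ne_zero_of_forall_ne_zpow hq1
      (zpow_mul_ne_zpow hq (inv_ne_zpow (ne_zpow_of_norm_lt hq0 hqa ha)) e)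
  have hB : ∀ e : ℤ, qPochInf (q ^ e * v ^ 2 / a) q ≠ 0 := fun e => by
    simpa only [mul_div_assoc, inv_div] using
      qPochInf_ne_zero_of_forall_ne_zpow hq1 (zpow_mul_ne_zpow hq (inv_ne_zpow hav2) e)
  have hC : ∀ e : ℤ, qPochInf (q ^ e * v ^ 2) q ≠ 0 := fun e =>
    qPochInf_ne_zero_of_forall_ne_zpow hq1 (zpow_mul_ne_zpow hq hv2 e)
  -- `field_simp` rewrites some, but not all, of the arguments `q ^ e * v ^ 2` as `v ^ 2 * q ^ e`
  have hB' : ∀ e : ℤ, qPochInf (v ^ 2 * q ^ e / a) q ≠ 0 := fun e => by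
    simpa only [mul_comm] using hB e
  have hC' : ∀ e : ℤ, qPochInf (v ^ 2 * q ^ e) q ≠ 0 := fun e => by
    simpa only [mul_comm] using hC e
  rw [← tsum_mul_left, ← tsum_mul_left, ← tsum_nat_add_eq_tsum_of_eq_zero (k := k)]
  · refine tsum_congr fun m => ?_
    simp only [qPochInt, div_mul_eq_mul_div, mul_right_comm _ (v ^ 2), ← zpow_add₀ hq,
      ← zpow_one_add₀ hq, Nat.cast_add]
    rw [show (1 - k + (m + k) : ℤ) = 1 + m by ring, show (1 + (m + k) - k : ℤ) = 1 + m by ring,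
      show (1 + (m + k) : ℤ) = 1 + k + m by ring, zpow_neg, zpow_natCast]
    field_simp [hA, hB, hC, hB', hC', qPochInf_zpow_ne_zero hq0 hq1 (e := 1 + m) (by positivity),
      qPochInf_zpow_ne_zero hq0 hq1 (e := 1 + k) (by positivity),
      qPochInf_zpow_ne_zero hq0 hq1 (e := 1 + k + m) (by positivity)]
    ring
  · intro n hn
    rw [qPochInf_zpow_eq_zero hq (by omega)]
    ring

theorem reflection_lemma_Nf2 (q a v : ℂ)
    (hq0 : 0 < ‖q‖) (hq1 : ‖q‖ < 1)
    (hqa : ‖q‖ < ‖a‖) (ha : ‖a‖ < 1)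
    (hv : v ≠ 0)
    (hv2 : ∀ m : ℤ, v ^ 2 ≠ q ^ m)
    (hav2 : ∀ m : ℤ, a / v ^ 2 ≠ q ^ m)
    (k : ℕ) :
    a ^ (-(k : ℤ)) *
      ((qPochInf (q ^ (1 - (k : ℤ)) * v ^ 2) q * qPochInf a q * qPochInf (a / v ^ 2) q) /
       (qPochInf (v ^ (-2 : ℤ)) q * qPochInf (q ^ (1 - (k : ℤ)) / a) q *
        qPochInf (q ^ (1 - (k : ℤ)) * v ^ 2 / a) q * qPochInf q q)) *
      (∑' n : ℕ,
        (qPochInt (q ^ (1 - (k : ℤ)) / a) q n * qPochInt (q ^ (1 - (k : ℤ)) * v ^ 2 / a) q n *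
         qPochInt (q / a) q n * qPochInt (q * v ^ 2 / a) q n) *
        qPochInf (q ^ (1 + (n : ℤ) - (k : ℤ))) q * a ^ (2 * n) /
        (qPochInt (q ^ (1 - (k : ℤ)) * v ^ 2) q n * qPochInt (q * v ^ 2) q n *
         qPochInt q q n))
    = a ^ (k : ℤ) *
      ((qPochInf (q ^ (1 + (k : ℤ))) q * qPochInf (q ^ (1 + (k : ℤ)) * v ^ 2) q *
        qPochInf a q * qPochInf (a / v ^ 2) q) /
       (qPochInf (v ^ (-2 : ℤ)) q * qPochInf (q ^ (1 + (k : ℤ)) / a) q *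
        qPochInf (q ^ (1 + (k : ℤ)) * v ^ 2 / a) q * qPochInf q q)) *
      (∑' n : ℕ,
        (qPochInt (q ^ (1 + (k : ℤ)) / a) q n * qPochInt (q ^ (1 + (k : ℤ)) * v ^ 2 / a) q n *
         qPochInt (q / a) q n * qPochInt (q * v ^ 2 / a) q n) * a ^ (2 * n) /
        (qPochInt (q ^ (1 + (k : ℤ))) q n * qPochInt (q ^ (1 + (k : ℤ)) * v ^ 2) q n *
         qPochInt (q * v ^ 2) q n * qPochInt q q n)) :=
  reflection_lemma_Nf2_general q a v hq0 hq1 hqa ha hv2 hav2 k
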